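/- arXiv:2504.02344 — 2 statements merged into one kernel-verified Lean document; each statement's English description precedes it below -/
import Mathlib

section
/- Let G be a directed graph with edge relation E = SO ∪ WR ∪ WW ∪ RW where WW⁺ = WW (WW is transitive), and suppose RW ⊆ RW₀ ∘ WW* for some RW₀ ⊆ RW, and WW ⊆ ŴW⁺ for some ŴW ⊆ WW. Let Ê = SO ∪ WR ∪ ŴW ∪ RW₀. Then E is acyclic if and only if Ê is acyclic. -/
/-!
Every ŴW- or RW₀-edge is a WW- or RW-edge, and conversely every WW-edge is a ŴW-path and every
RW-edge an RW₀-edge followed by a WW-path, hence by a ŴW-path. So the two edge relations have the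
same transitive closure, and in particular the same cycles.
-/

namespace Relation

variable {α : Type*} {r s : α → α → Prop}

theorem acyclic_iff_of_le_transGen (hrs : r ≤ TransGen s) (hsr : s ≤ TransGen r) :
    (∀ a, ¬ TransGen r a a) ↔ (∀ a, ¬ TransGen s a a) :=
  ⟨fun hr a hs => hr a (TransGen.closed hsr a a hs),
    fun hs a hr => hs a (TransGen.closed hrs a a hr)⟩

theorem transGen_of_comp_reflTransGen {t : α → α → Prop} (hr : r ≤ t) (hs : s ≤ TransGen t)
    {a b : α} (h : Comp r (ReflTransGen s) a b) : TransGen t a b := by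
  obtain ⟨c, hac, hcb⟩ := h
  have hcb' : ReflTransGen t c b :=
    reflTransGen_closed (fun x y hxy => (hs x y hxy).to_reflTransGen) c b hcb
  exact TransGen.head' (hr a c hac) hcb'

end Relation

theorem acyclic_union_iff_reduced_general {T : Type*}
    (SO WR WW RW RW0 WWhat : T → T → Prop)
    (hRW0sub : ∀ a b, RW0 a b → RW a b)
    (hRWfact : ∀ a b, RW a b → Relation.Comp RW0 (Relation.ReflTransGen WW) a b)
    (hWWhatsub : ∀ a b, WWhat a b → WW a b)
    (hWWgen : ∀ a b, WW a b → Relation.TransGen WWhat a b) :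
    (∀ a, ¬ Relation.TransGen (fun u v => SO u v ∨ WR u v ∨ WW u v ∨ RW u v) a a) ↔
    (∀ a, ¬ Relation.TransGen (fun u v => SO u v ∨ WR u v ∨ WWhat u v ∨ RW0 u v) a a) := by
  set F := fun u v => SO u v ∨ WR u v ∨ WWhat u v ∨ RW0 u v
  have hWW : WW ≤ Relation.TransGen F := fun a b h =>
    Relation.TransGen.mono (fun _ _ h => Or.inr (Or.inr (Or.inl h))) a b (hWWgen a b h)
  apply Relation.acyclic_iff_of_le_transGen
  · rintro a b (h | h | h | h)
    · exact .single (Or.inl h)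
    · exact .single (Or.inr (Or.inl h))
    · exact hWW a b h
    · exact Relation.transGen_of_comp_reflTransGen (fun _ _ h => Or.inr (Or.inr (Or.inr h))) hWW
        (hRWfact a b h)
  · rintro a b (h | h | h | h)
    · exact .single (Or.inl h)
    · exact .single (Or.inr (Or.inl h))
    · exact .single (Or.inr (Or.inr (Or.inl (hWWhatsub a b h))))
    · exact .single (Or.inr (Or.inr (Or.inr (hRW0sub a b h))))

/-- Replacing WW by a generating subrelation ŴW and RW by RW₀ (with RW ⊆ RW₀ ∘ WW*)
    preserves acyclicity of the union. -/
theorem acyclic_union_iff_reduced {T : Type*}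
    (SO WR WW RW RW0 WWhat : T → T → Prop)
    (hWWtrans : Transitive WW)
    (hRW0sub : ∀ a b, RW0 a b → RW a b)
    (hRWfact : ∀ a b, RW a b → Relation.Comp RW0 (Relation.ReflTransGen WW) a b)
    (hWWhatsub : ∀ a b, WWhat a b → WW a b)
    (hWWgen : ∀ a b, WW a b → Relation.TransGen WWhat a b) :
    (∀ a, ¬ Relation.TransGen (fun u v => SO u v ∨ WR u v ∨ WW u v ∨ RW u v) a a) ↔
    (∀ a, ¬ Relation.TransGen (fun u v => SO u v ∨ WR u v ∨ WWhat u v ∨ RW0 u v) a a) :=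
  acyclic_union_iff_reduced_general SO WR WW RW RW0 WWhat hRW0sub hRWfact hWWhatsub hWWgen
end

section
/- If a relation SO on a finite set T is a disjoint union of strict total orders on the blocks of a partition of T (sessions), then SO equals the transitive closure of its covering relation (successor relation within each session), and replacing SO by its covering relation in any union E = SO ∪ X preserves acyclicity: SO ∪ X is acyclic iff cover(SO) ∪ X is acyclic, for any relation X on T. -/
/-!
Viewed as the strict part of a partial order, `SO` on a finite type is locally finite, so it
is the transitive closure of its covering relation `⋖`. A relation and any subrelation
generating it have the same transitive closure after adding an arbitrary `X`, so acyclicity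
of the union is unaffected by the swap.
-/

open Relation

theorem Relation.transGen_cover_eq_of_finite {α : Type*} [Finite α] (r : α → α → Prop)
    [IsStrictOrder α r] :
    TransGen (fun a b => r a b ∧ ¬∃ c, r a c ∧ r c b) = r := by
  classical
  let _ := partialOrderOfSO r
  have := Fintype.ofFinite α
  let _ := Fintype.toLocallyFiniteOrder (α := α)
  have hcover : (fun a b => r a b ∧ ¬∃ c, r a c ∧ r c b) = (· ⋖ ·) := by
    funext a b
    simp only [not_exists, not_and]
    rfl
  funext a b
  rw [hcover]
  exact propext lt_iff_transGen_covBy.symm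

theorem Relation.transGen_or_eq_of_le_of_le_transGen {α : Type*} {r s X : α → α → Prop}
    (hsr : s ≤ r) (hrs : r ≤ TransGen s) :
    TransGen (fun a b => r a b ∨ X a b) = TransGen (fun a b => s a b ∨ X a b) := by
  refine le_antisymm (transGen_minimal fun u v huv => ?_)
    (TransGen.mono fun u v => Or.imp_left (hsr u v))
  rcases huv with huv | huv
  · exact TransGen.mono (fun _ _ => Or.inl) _ _ (hrs u v huv)
  · exact .single (Or.inr huv)

theorem session_order_cover_general {T : Type*} [Fintype T]
    (SO : T → T → Prop)
    (hirr : Irreflexive SO) (htrans : Transitive SO) :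
    let cover : T → T → Prop := fun a b => SO a b ∧ ¬ ∃ c, SO a c ∧ SO c b
    (SO = fun a b => Relation.TransGen cover a b) ∧
    (∀ X : T → T → Prop,
      (∀ a, ¬ Relation.TransGen (fun u v => SO u v ∨ X u v) a a) ↔
      (∀ a, ¬ Relation.TransGen (fun u v => cover u v ∨ X u v) a a)) := by
  intro cover
  have : IsStrictOrder T SO := { irrefl := hirr, trans := @htrans }
  have hSO : TransGen cover = SO := transGen_cover_eq_of_finite SO
  refine ⟨hSO.symm, fun X => ?_⟩
  rw [transGen_or_eq_of_le_of_le_transGen (fun _ _ h => h.1) hSO.ge]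

/-- A disjoint union of per-session strict total orders equals the transitive closure of
    its covering relation, and replacing it by the covering relation in any union
    preserves acyclicity. -/
theorem session_order_cover {T : Type*} [Fintype T] {S : Type*} (session : T → S)
    (SO : T → T → Prop)
    (hsess : ∀ a b, SO a b → session a = session b)
    (hirr : Irreflexive SO) (htrans : Transitive SO)
    (htotal : ∀ a b, a ≠ b → session a = session b → SO a b ∨ SO b a) :
    let cover : T → T → Prop := fun a b => SO a b ∧ ¬ ∃ c, SO a c ∧ SO c b
    (SO = fun a b => Relation.TransGen cover a b) ∧
    (∀ X : T → T → Prop,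
      (∀ a, ¬ Relation.TransGen (fun u v => SO u v ∨ X u v) a a) ↔
      (∀ a, ¬ Relation.TransGen (fun u v => cover u v ∨ X u v) a a)) :=
  session_order_cover_general SO hirr htrans
end
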